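/- Acyclicity of the bit-chipping field: the V∂-graph of V_bc on K(N,1) contains no directed cycle. Concretely, assign to each not-fully-dyadic target simplex τ the triple (−q(τ), b(τ), reverse-lexicographic rank of its dyadic part) appropriately ordered; then each double move τ → τ' = V_bc(∂_jτ) strictly decreases a suitable well-founded complexity measure: either the dyadic length q increases, or q is constant and the breakpoint value decreases, or both are constant and the dyadic part increases lexicographically; for fully dyadic simplices, either the sum of components decreases or it stays constant and the sequence increases lexicographically. -/

import Mathlib

/-- `lpow b` is the largest power of 2 not exceeding `b` (for `b ≥ 1`). -/
def lpow (b : ℕ) : ℕ := 2 ^ Nat.log 2 b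

/-- `ltrim b = b - lpow b`. -/
def ltrim (b : ℕ) : ℕ := b - lpow b

/-- All entries of the sequence are positive (nondegenerate simplex of `K(ℕ,1)`). -/
def posL (l : List ℕ) : Prop := ∀ a ∈ l, 1 ≤ a

/-- The length `q` of the dyadic part of `[a_1 | ⋯ | a_k]`: the largest `q` such that
`a_1, …, a_q` are all powers of 2. -/
def dyLen (l : List ℕ) : ℕ :=
  (l.takeWhile fun a => a == 2 ^ Nat.log 2 a).length

/-- `l` is fully dyadic: all entries are powers of 2. -/
def fullyDyadic (l : List ℕ) : Prop := dyLen l = l.length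

/-- Source simplices of type (a) of the bit-chipping field: not fully dyadic, with no
peak, i.e. the dyadic part `a_1 ≤ ⋯ ≤ a_q` is nondecreasing and (if nonempty) its last
entry is smaller than the breakpoint value `a_{q+1}`. -/
def srcA (l : List ℕ) : Prop :=
  dyLen l < l.length ∧
  (∀ i, i + 1 < dyLen l → l.getD i 0 ≤ l.getD (i + 1) 0) ∧
  (∀ i, i + 1 = dyLen l → l.getD i 0 < l.getD (dyLen l) 0)

/-- The bit-chipping field on a type (a) source: split the breakpoint value `b` into
`lpow b | ltrim b`. -/
def VbcA (l : List ℕ) : List ℕ :=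
  l.take (dyLen l) ++ [lpow (l.getD (dyLen l) 0), ltrim (l.getD (dyLen l) 0)] ++
    l.drop (dyLen l + 1)

/-- Source simplices of type (b) of the bit-chipping field: fully dyadic sequences
`a_1 ≤ ⋯ ≤ a_{k-1} < a_k` with `a_k ≥ 2`. -/
def srcB (l : List ℕ) : Prop :=
  fullyDyadic l ∧ l ≠ [] ∧
  (∀ i, i + 2 < l.length → l.getD i 0 ≤ l.getD (i + 1) 0) ∧
  (∀ i, i + 2 = l.length → l.getD i 0 < l.getD (i + 1) 0) ∧
  2 ≤ l.getD (l.length - 1) 0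

/-- The bit-chipping field on a type (b) source: split the last entry into two equal
halves. -/
def VbcB (l : List ℕ) : List ℕ :=
  l.dropLast ++ [l.getD (l.length - 1) 0 / 2, l.getD (l.length - 1) 0 / 2]

/-- The bit-chipping vector field `V_bc`, as a relation: `VbcRel σ τ` iff `σ` is a
source (of type (a) or (b)) and `τ = V_bc σ`. -/
def VbcRel (σ τ : List ℕ) : Prop :=
  (srcA σ ∧ τ = VbcA σ) ∨ (srcB σ ∧ τ = VbcB σ)

/-- The face operator `∂ᵢ` on a simplex `[a_1 | ⋯ | a_k]` of `K(ℕ,1)`: `∂_0` deletes the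
first entry, `∂_k` the last, and for `0 < i < k`, `∂ᵢ` replaces `a_i, a_{i+1}` by their
sum. -/
def faceN (i : ℕ) (l : List ℕ) : List ℕ :=
  if i = 0 then l.tail
  else if i = l.length then l.dropLast
  else l.take (i - 1) ++ [l.getD (i - 1) 0 + l.getD i 0] ++ l.drop (i + 1)

/-- The breakpoint value of a (not fully dyadic) simplex. -/
def bval (l : List ℕ) : ℕ := l.getD (dyLen l) 0

/-- The edges of the `V∂`-graph of the bit-chipping field: from a source `σ` up to
`V_bc σ`, and from a target `τ` down to any nondegenerate face `∂ᵢτ` that is a source or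
critical simplex (i.e. not a target) not matched to `τ`. -/
def edgeBc (x y : List ℕ) : Prop :=
  (posL x ∧ VbcRel x y) ∨
  ((∃ s, posL s ∧ VbcRel s x) ∧
    ∃ i ≤ x.length, y = faceN i x ∧ posL y ∧ ¬ VbcRel y x ∧ ¬ ∃ s', posL s' ∧ VbcRel s' y)

/-- A double move between target simplices: `τ → τ' = V_bc (∂ⱼ τ)` where `∂ⱼ τ` is a
source not matched to `τ`. -/
def dmTgt (τ τ' : List ℕ) : Prop :=
  (∃ s, posL s ∧ VbcRel s τ) ∧
  ∃ j ≤ τ.length, posL (faceN j τ) ∧ ¬ VbcRel (faceN j τ) τ ∧ VbcRel (faceN j τ) τ'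

/-!
A target is never a source: `V_bc` leaves a strict descent `lpow b > ltrim b`, or a final tie
`L / 2, L / 2`, and no source has either. So a source can be ranked just above its partner and
a critical simplex below everything, and acyclicity reduces to a complexity that strictly
decreases along the double moves `τ → V_bc (∂ⱼ τ)`, all of which preserve the length.

If `τ` is fully dyadic, an end face drops a positive entry, so the sum decreases; an inner face
merges two powers of two, and the unmatched split of such a face only produces sequences of the
same sum that are lexicographically larger. Otherwise, if the face `y` keeps the dyadic prefix
of `τ`, then `V_bc y` has a longer one. If not, the face merged inside the prefix (or dropped
its first entry), and `V_bc y` has a longer prefix, or the same one with a smaller breakpoint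
value (`ltrim` of `b`, or of `a + b` with a dyadic `a < b`), or, after merging unequal dyadic
entries `a₁ < a₂`, the same prefix with these two swapped, which is lexicographically larger.
The order `a₁ > a₂` cannot occur, as `τ` would then be the partner of its own face.
-/

/-! ### Powers of two -/

def IsPowTwo (a : ℕ) : Prop := a = 2 ^ Nat.log 2 a

theorem isPowTwo_two_pow (k : ℕ) : IsPowTwo (2 ^ k) := by
  rw [IsPowTwo, Nat.log_pow one_lt_two]

theorem IsPowTwo.one_le {a : ℕ} (h : IsPowTwo a) : 1 ≤ a := by
  rw [h]; exact Nat.one_le_two_pow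

theorem isPowTwo_lpow (b : ℕ) : IsPowTwo (lpow b) := isPowTwo_two_pow _

theorem isPowTwo_iff_lpow_eq {a : ℕ} : IsPowTwo a ↔ lpow a = a := eq_comm

theorem lpow_le {b : ℕ} (hb : 1 ≤ b) : lpow b ≤ b := Nat.pow_log_le_self 2 (by omega)

theorem lpow_add_ltrim {b : ℕ} (hb : 1 ≤ b) : lpow b + ltrim b = b := by
  have := lpow_le hb; unfold ltrim; omega

theorem ltrim_lt_lpow (b : ℕ) : ltrim b < lpow b := by
  have h := Nat.lt_pow_succ_log_self one_lt_two b
  rw [pow_succ] at h; unfold ltrim lpow; omega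

theorem one_le_ltrim {b : ℕ} (hb : 1 ≤ b) (h : ¬ IsPowTwo b) : 1 ≤ ltrim b := by
  have := lpow_le hb
  have : lpow b ≠ b := mt isPowTwo_iff_lpow_eq.mpr h
  unfold ltrim; omega

theorem ltrim_lt {b : ℕ} (hb : 1 ≤ b) : ltrim b < b := by
  have := ltrim_lt_lpow b; have := lpow_add_ltrim hb; omega

theorem lpow_add_of_lt {d b : ℕ} (hd : IsPowTwo d) (hb : 1 ≤ b) (hbd : b < d) :
    lpow (d + b) = d := by
  have hd' : d = 2 ^ Nat.log 2 d := hd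
  rw [lpow, Nat.log_eq_of_pow_le_of_lt_pow (m := Nat.log 2 d) (by omega) (by rw [pow_succ]; omega),
    ← hd]

theorem ltrim_add_of_lt {d b : ℕ} (hd : IsPowTwo d) (hb : 1 ≤ b) (hbd : b < d) :
    ltrim (d + b) = b := by
  rw [ltrim, lpow_add_of_lt hd hb hbd]; omega

theorem not_isPowTwo_add_of_lt {d b : ℕ} (hd : IsPowTwo d) (hb : 1 ≤ b) (hbd : b < d) :
    ¬ IsPowTwo (d + b) := by
  rw [isPowTwo_iff_lpow_eq, lpow_add_of_lt hd hb hbd]; omega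

theorem IsPowTwo.add_self {a : ℕ} (h : IsPowTwo a) : IsPowTwo (a + a) := by
  rw [h, ← two_mul, ← pow_succ']; exact isPowTwo_two_pow _

theorem IsPowTwo.eq_of_add {a b : ℕ} (ha : IsPowTwo a) (hb : IsPowTwo b)
    (hab : IsPowTwo (a + b)) : a = b := by
  rcases lt_trichotomy a b with h | h | h
  · exact absurd (add_comm a b ▸ hab) (not_isPowTwo_add_of_lt hb ha.one_le h)
  · exact h
  · exact absurd hab (not_isPowTwo_add_of_lt ha hb.one_le h)

theorem ltrim_add_lt_of_lt {d b : ℕ} (hd : IsPowTwo d) (hdb : d < b) : ltrim (d + b) < b := by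
  have h2d : 2 * d ≤ lpow (d + b) := by
    rw [hd, ← pow_succ', lpow]
    exact Nat.pow_le_pow_right two_pos
      (Nat.le_log_of_pow_le one_lt_two (by rw [pow_succ, ← hd]; omega))
  have := lpow_le (show 1 ≤ d + b by omega)
  have := hd.one_le
  unfold ltrim; omega

theorem IsPowTwo.half {L : ℕ} (h : IsPowTwo L) (hL : 2 ≤ L) :
    IsPowTwo (L / 2) ∧ L / 2 + L / 2 = L := by
  obtain ⟨k, rfl⟩ : ∃ k, L = 2 ^ (k + 1) := by
    refine ⟨Nat.log 2 L - 1, ?_⟩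
    rw [Nat.sub_add_cancel (Nat.log_pos one_lt_two hL), ← h]
  rw [pow_succ, Nat.mul_div_cancel _ two_pos]
  exact ⟨isPowTwo_two_pow k, by ring⟩

/-! ### The dyadic prefix -/

theorem dyLen_cons_of_isPowTwo {a : ℕ} (l : List ℕ) (h : IsPowTwo a) :
    dyLen (a :: l) = dyLen l + 1 := by
  rw [dyLen, List.takeWhile_cons_of_pos (p := fun a => a == 2 ^ Nat.log 2 a) (beq_iff_eq.mpr h),
    List.length_cons, dyLen]

theorem dyLen_cons_of_not_isPowTwo {a : ℕ} (l : List ℕ) (h : ¬ IsPowTwo a) :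
    dyLen (a :: l) = 0 := by
  rw [dyLen, List.takeWhile_cons_of_neg (by simpa [IsPowTwo] using h), List.length_nil]

theorem dyLen_append_of_forall {u : List ℕ} (v : List ℕ) (h : ∀ a ∈ u, IsPowTwo a) :
    dyLen (u ++ v) = u.length + dyLen v := by
  simp [dyLen, List.takeWhile_append_of_pos (fun a ha => beq_iff_eq.mpr (h a ha))]

theorem dyLen_le_length (l : List ℕ) : dyLen l ≤ l.length :=
  (List.takeWhile_sublist _).length_le

theorem dyLen_take (k : ℕ) (l : List ℕ) : dyLen (l.take k) = min k (dyLen l) := by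
  rw [dyLen, ← List.take_takeWhile, List.length_take, dyLen]

theorem fullyDyadic_iff {l : List ℕ} : fullyDyadic l ↔ ∀ a ∈ l, IsPowTwo a := by
  rw [fullyDyadic, dyLen, (List.takeWhile_sublist _).length_eq, List.takeWhile_eq_self_iff]
  simp [IsPowTwo]

theorem dyLen_append_cons_of_not_isPowTwo {u : List ℕ} {c : ℕ} (v : List ℕ)
    (hu : ∀ a ∈ u, IsPowTwo a) (hc : ¬ IsPowTwo c) : dyLen (u ++ c :: v) = u.length := by
  rw [dyLen_append_of_forall _ hu, dyLen_cons_of_not_isPowTwo _ hc, add_zero]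

theorem bval_append_cons_of_not_isPowTwo {u : List ℕ} {c : ℕ} (v : List ℕ)
    (hu : ∀ a ∈ u, IsPowTwo a) (hc : ¬ IsPowTwo c) : bval (u ++ c :: v) = c := by
  rw [bval, dyLen_append_cons_of_not_isPowTwo v hu hc, List.getD_append_right _ _ _ _ le_rfl]
  simp

theorem bval_cons_of_isPowTwo {a : ℕ} (l : List ℕ) (h : IsPowTwo a) : bval (a :: l) = bval l := by
  rw [bval, dyLen_cons_of_isPowTwo _ h, List.getD_cons_succ, bval]

theorem min_length_dyLen_append (u v w : List ℕ) :
    min u.length (dyLen (u ++ v)) = min u.length (dyLen (u ++ w)) := by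
  rw [← dyLen_take, ← dyLen_take, List.take_left' rfl, List.take_left' rfl]

theorem forall_isPowTwo_of_length_le_dyLen {u v : List ℕ} (h : u.length ≤ dyLen (u ++ v)) :
    ∀ a ∈ u, IsPowTwo a := by
  rw [← fullyDyadic_iff, fullyDyadic]
  have := min_length_dyLen_append u v []
  rw [List.append_nil, min_eq_left h, min_eq_right (dyLen_le_length u)] at this
  exact this.symm

theorem exists_eq_append_cons_of_not_fullyDyadic {l : List ℕ} (h : ¬ fullyDyadic l) :
    ∃ Q c T, l = Q ++ c :: T ∧ (∀ a ∈ Q, IsPowTwo a) ∧ ¬ IsPowTwo c := by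
  induction l with
  | nil => simp [fullyDyadic_iff] at h
  | cons a l ih =>
    by_cases ha : IsPowTwo a
    · obtain ⟨Q, c, T, rfl, hQ, hc⟩ := ih (by simpa [fullyDyadic_iff, ha] using h)
      exact ⟨a :: Q, c, T, rfl, by simpa [ha] using hQ, hc⟩
    · exact ⟨[], a, l, rfl, by simp, ha⟩

theorem VbcA_append_cons {u : List ℕ} {c : ℕ} (v : List ℕ) (hu : ∀ a ∈ u, IsPowTwo a)
    (hc : ¬ IsPowTwo c) : VbcA (u ++ c :: v) = u ++ lpow c :: ltrim c :: v := by
  rw [VbcA, ← bval, bval_append_cons_of_not_isPowTwo v hu hc,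
    dyLen_append_cons_of_not_isPowTwo v hu hc, List.take_left' rfl,
    show u ++ c :: v = (u ++ [c]) ++ v by simp, List.drop_left' (by simp)]
  simp

theorem VbcA_append_add_of_lt {A : List ℕ} {d b : ℕ} (R : List ℕ) (hA : ∀ a ∈ A, IsPowTwo a)
    (hd : IsPowTwo d) (hb : 1 ≤ b) (hbd : b < d) :
    VbcA (A ++ (d + b) :: R) = A ++ d :: b :: R := by
  rw [VbcA_append_cons R hA (not_isPowTwo_add_of_lt hd hb hbd), lpow_add_of_lt hd hb hbd,
    ltrim_add_of_lt hd hb hbd]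

theorem VbcB_append_singleton (u : List ℕ) (L : ℕ) : VbcB (u ++ [L]) = u ++ [L / 2, L / 2] := by
  simp [VbcB]

/-! ### Sources and targets of `V_bc` -/

theorem exists_eq_append_cons_of_srcA {y : List ℕ} (h : srcA y) :
    ∃ Q c T, y = Q ++ c :: T ∧ (∀ a ∈ Q, IsPowTwo a) ∧ ¬ IsPowTwo c :=
  exists_eq_append_cons_of_not_fullyDyadic h.1.ne

theorem exists_eq_append_singleton_of_srcB {y : List ℕ} (h : srcB y) :
    ∃ u L, y = u ++ [L] ∧ (∀ a ∈ u, IsPowTwo a) ∧ IsPowTwo L ∧ 2 ≤ L := by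
  obtain ⟨hfd, hne, -, -, hL⟩ := h
  obtain ⟨u, L, rfl⟩ := List.eq_nil_or_concat' y |>.resolve_left hne
  have hall := fullyDyadic_iff.mp hfd
  exact ⟨u, L, rfl, fun a ha => hall a (by simp [ha]), hall L (by simp), by simpa using hL⟩

theorem dyLen_VbcA_cases {y : List ℕ} (h : dyLen y < y.length) :
    dyLen y + 1 < dyLen (VbcA y) ∨
      (dyLen (VbcA y) = dyLen y + 1 ∧ bval (VbcA y) = ltrim (bval y)) := by
  obtain ⟨Q, c, T, rfl, hQ, hc⟩ := exists_eq_append_cons_of_not_fullyDyadic h.ne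
  rw [VbcA_append_cons T hQ hc, dyLen_append_cons_of_not_isPowTwo T hQ hc,
    bval_append_cons_of_not_isPowTwo T hQ hc]
  have hQc : ∀ a ∈ Q ++ [lpow c], IsPowTwo a :=
    List.forall_mem_append.mpr ⟨hQ, List.forall_mem_singleton.mpr (isPowTwo_lpow c)⟩
  have hsplit : Q ++ lpow c :: ltrim c :: T = (Q ++ [lpow c]) ++ ltrim c :: T := by simp
  by_cases ht : IsPowTwo (ltrim c)
  · left
    rw [hsplit, dyLen_append_of_forall _ hQc, dyLen_cons_of_isPowTwo _ ht]
    simp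
  · right
    rw [hsplit, dyLen_append_cons_of_not_isPowTwo T hQc ht,
      bval_append_cons_of_not_isPowTwo T hQc ht]
    simp

theorem lt_dyLen_VbcA {y : List ℕ} (h : dyLen y < y.length) : dyLen y < dyLen (VbcA y) := by
  rcases dyLen_VbcA_cases h with h | ⟨h, -⟩ <;> omega

theorem fullyDyadic_VbcB {y : List ℕ} (h : srcB y) : fullyDyadic (VbcB y) := by
  obtain ⟨u, L, rfl, hu, hL, hL2⟩ := exists_eq_append_singleton_of_srcB h
  rw [VbcB_append_singleton, fullyDyadic_iff]
  exact List.forall_mem_append.mpr ⟨hu, by simp [(hL.half hL2).1]⟩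

theorem VbcRel.length_eq {y τ : List ℕ} (h : VbcRel y τ) : τ.length = y.length + 1 := by
  rcases h with ⟨hA, rfl⟩ | ⟨hB, rfl⟩
  · obtain ⟨Q, c, T, rfl, hQ, hc⟩ := exists_eq_append_cons_of_srcA hA
    simp [VbcA_append_cons T hQ hc]
    omega
  · obtain ⟨u, L, rfl, -⟩ := exists_eq_append_singleton_of_srcB hB
    simp [VbcB_append_singleton]

theorem VbcRel.sum_eq {y τ : List ℕ} (hy : posL y) (h : VbcRel y τ) : τ.sum = y.sum := by
  rcases h with ⟨hA, rfl⟩ | ⟨hB, rfl⟩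
  · obtain ⟨Q, c, T, rfl, hQ, hc⟩ := exists_eq_append_cons_of_srcA hA
    have := lpow_add_ltrim (hy c (by simp))
    simp [VbcA_append_cons T hQ hc]
    omega
  · obtain ⟨u, L, rfl, -, hL, hL2⟩ := exists_eq_append_singleton_of_srcB hB
    have := (hL.half hL2).2
    simp [VbcB_append_singleton]
    omega

theorem posL_of_VbcRel {s x : List ℕ} (hs : posL s) (h : VbcRel s x) : posL x := by
  rcases h with ⟨hA, rfl⟩ | ⟨hB, rfl⟩
  · obtain ⟨Q, c, T, rfl, hQ, hc⟩ := exists_eq_append_cons_of_srcA hA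
    intro a ha
    simp only [VbcA_append_cons T hQ hc, List.mem_append, List.mem_cons] at ha
    rcases ha with ha | rfl | rfl | ha
    · exact hs a (by simp [ha])
    · exact (isPowTwo_lpow c).one_le
    · exact one_le_ltrim (hs c (by simp)) hc
    · exact hs a (by simp [ha])
  · obtain ⟨u, L, rfl, -, hL, hL2⟩ := exists_eq_append_singleton_of_srcB hB
    intro a ha
    simp only [VbcB_append_singleton, List.mem_append, List.mem_cons, List.not_mem_nil,
      or_false, or_self] at ha
    rcases ha with ha | rfl
    · exact hs a (by simp [ha])
    · omega

theorem not_srcA_of_fullyDyadic {l : List ℕ} (h : fullyDyadic l) : ¬ srcA l :=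
  fun hA => hA.1.ne h

theorem getD_append_cons_cons (U V : List ℕ) (x y : ℕ) :
    (U ++ x :: y :: V).getD U.length 0 = x ∧ (U ++ x :: y :: V).getD (U.length + 1) 0 = y := by
  simp [List.getD_eq_getElem?_getD]

theorem not_srcA_of_gt {U V : List ℕ} {x y : ℕ} (hU : ∀ a ∈ U, IsPowTwo a) (hx : IsPowTwo x)
    (hyx : y < x) : ¬ srcA (U ++ x :: y :: V) := by
  rintro ⟨-, hmono, hpeak⟩
  have hUx : ∀ a ∈ U ++ [x], IsPowTwo a :=
    List.forall_mem_append.mpr ⟨hU, List.forall_mem_singleton.mpr hx⟩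
  have hsplit : U ++ x :: y :: V = (U ++ [x]) ++ y :: V := by simp
  obtain ⟨hgx, hgy⟩ := getD_append_cons_cons U V x y
  by_cases hy : IsPowTwo y
  · have hq : U.length + 2 ≤ dyLen (U ++ x :: y :: V) := by
      rw [hsplit, dyLen_append_of_forall _ hUx, dyLen_cons_of_isPowTwo _ hy]
      simp; omega
    have := hmono U.length (by omega)
    omega
  · have hq : dyLen (U ++ x :: y :: V) = U.length + 1 := by
      rw [hsplit, dyLen_append_cons_of_not_isPowTwo V hUx hy]
      simp
    have := hpeak U.length hq.symm
    rw [hq] at this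
    omega

theorem not_srcB_of_gt {U V : List ℕ} {x y : ℕ} (hyx : y < x) :
    ¬ srcB (U ++ x :: y :: V) := by
  rintro ⟨-, -, hmono, hlast, -⟩
  obtain ⟨hgx, hgy⟩ := getD_append_cons_cons U V x y
  rcases V.eq_nil_or_concat' with rfl | ⟨V, z, rfl⟩
  · have := hlast U.length (by simp)
    omega
  · have := hmono U.length (by simp)
    omega

theorem not_srcB_append_pair_self (u : List ℕ) (m : ℕ) : ¬ srcB (u ++ [m, m]) := by
  rintro ⟨-, -, -, hlast, -⟩
  have := hlast u.length (by simp)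
  obtain ⟨hg1, hg2⟩ := getD_append_cons_cons u [] m m
  simp only [hg1, hg2] at this
  omega

theorem VbcRel.not_src {s x : List ℕ} (h : VbcRel s x) :
    ¬ srcA x ∧ ¬ srcB x := by
  rcases h with ⟨hA, rfl⟩ | ⟨hB, rfl⟩
  · obtain ⟨Q, c, T, rfl, hQ, hc⟩ := exists_eq_append_cons_of_srcA hA
    rw [VbcA_append_cons T hQ hc]
    exact ⟨not_srcA_of_gt hQ (isPowTwo_lpow c) (ltrim_lt_lpow c),
      not_srcB_of_gt (ltrim_lt_lpow c)⟩
  · exact ⟨not_srcA_of_fullyDyadic (fullyDyadic_VbcB hB), by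
      obtain ⟨u, L, rfl, -⟩ := exists_eq_append_singleton_of_srcB hB
      rw [VbcB_append_singleton]
      exact not_srcB_append_pair_self u (L / 2)⟩

/-! ### Double moves -/

theorem faceN_cases {j : ℕ} {τ : List ℕ} (hj : j ≤ τ.length) (hne : τ ≠ []) :
    (∃ a, τ = a :: faceN j τ) ∨ (∃ a, τ = faceN j τ ++ [a]) ∨
      ∃ A a₁ a₂ B, τ = A ++ a₁ :: a₂ :: B ∧ faceN j τ = A ++ (a₁ + a₂) :: B := by
  unfold faceN
  split_ifs with h0 hlast
  · obtain ⟨a, t, rfl⟩ := List.exists_cons_of_ne_nil hne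
    exact Or.inl ⟨a, rfl⟩
  · exact Or.inr (Or.inl ⟨_, (List.dropLast_append_getLast hne).symm⟩)
  · obtain ⟨k, rfl⟩ := Nat.exists_eq_add_one.mpr (Nat.pos_of_ne_zero h0)
    have hlt : k + 1 < τ.length := lt_of_le_of_ne hj hlast
    refine Or.inr (Or.inr ⟨τ.take k, τ[k], τ[k + 1], τ.drop (k + 2), ?_,
      by simp [hlt, Nat.lt_of_succ_lt hlt]⟩)
    rw [← List.drop_eq_getElem_cons hlt, ← List.drop_eq_getElem_cons, List.take_append_drop]

theorem VbcRel.ne_nil {y τ : List ℕ} (h : VbcRel y τ) : y ≠ [] := by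
  rcases h with ⟨hA, -⟩ | ⟨hB, -⟩
  · rintro rfl; exact absurd hA.1 (by simp)
  · exact hB.2.1

theorem ne_nil_of_VbcRel_faceN {j : ℕ} {τ τ' : List ℕ} (hj : j ≤ τ.length)
    (h : VbcRel (faceN j τ) τ') : τ ≠ [] := by
  rintro rfl
  obtain rfl : j = 0 := by simpa using hj
  exact h.ne_nil rfl

theorem length_eq_of_VbcRel_faceN {j : ℕ} {τ τ' : List ℕ} (hj : j ≤ τ.length)
    (h : VbcRel (faceN j τ) τ') : τ'.length = τ.length := by
  rw [h.length_eq]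
  rcases faceN_cases hj (ne_nil_of_VbcRel_faceN hj h) with
    ⟨a, hτ⟩ | ⟨a, hτ⟩ | ⟨A, a₁, a₂, B, hτ, hy⟩
  · conv_rhs => rw [hτ]
    simp
  · conv_rhs => rw [hτ]
    simp
  · rw [hy, hτ]; simp; omega

theorem lex_append_cons_of_lt {u v w : List ℕ} {x y : ℕ} (h : x < y) :
    List.Lex (· < ·) (u ++ x :: v) (u ++ y :: w) :=
  List.Lex.append_left _ (List.Lex.rel h) u

theorem fullyDyadic_and_sum_lt_of_end_face {τ y τ' : List ℕ} {a : ℕ} (hfd : fullyDyadic τ)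
    (hend : τ = a :: y ∨ τ = y ++ [a]) (ha : 1 ≤ a) (hy : posL y) (hrel : VbcRel y τ') :
    fullyDyadic τ' ∧ τ'.sum < τ.sum := by
  have hyfd : fullyDyadic y := by
    refine fullyDyadic_iff.mpr fun b hb => fullyDyadic_iff.mp hfd b ?_
    rcases hend with rfl | rfl <;> simp [hb]
  rw [hrel.sum_eq hy]
  obtain ⟨hB, rfl⟩ := hrel.resolve_left fun h => not_srcA_of_fullyDyadic hyfd h.1
  refine ⟨fullyDyadic_VbcB hB, ?_⟩
  rcases hend with rfl | rfl <;> simp <;> omega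

theorem fullyDyadic_and_lex_of_merge {A B τ' : List ℕ} {a₁ a₂ : ℕ}
    (hfd : fullyDyadic (A ++ a₁ :: a₂ :: B)) (hpos : posL (A ++ a₁ :: a₂ :: B))
    (hnm : ¬ VbcRel (A ++ (a₁ + a₂) :: B) (A ++ a₁ :: a₂ :: B))
    (hrel : VbcRel (A ++ (a₁ + a₂) :: B) τ') :
    fullyDyadic τ' ∧ List.Lex (· < ·) (A ++ a₁ :: a₂ :: B) τ' := by
  have hall := fullyDyadic_iff.mp hfd
  have hA : ∀ a ∈ A, IsPowTwo a := fun a ha => hall a (by simp [ha])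
  have hB : ∀ a ∈ B, IsPowTwo a := fun a ha => hall a (by simp [ha])
  have ha₁ : IsPowTwo a₁ := hall a₁ (by simp)
  have ha₂ : IsPowTwo a₂ := hall a₂ (by simp)
  rcases hrel with ⟨hsA, rfl⟩ | ⟨hsB, rfl⟩
  · have hsum : ¬ IsPowTwo (a₁ + a₂) := fun h =>
      not_srcA_of_fullyDyadic (fullyDyadic_iff.mpr (List.forall_mem_append.mpr
        ⟨hA, List.forall_mem_cons.mpr ⟨h, hB⟩⟩)) hsA
    rcases lt_trichotomy a₁ a₂ with hlt | rfl | hgt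
    · rw [add_comm, VbcA_append_add_of_lt B hA ha₂ ha₁.one_le hlt]
      refine ⟨fullyDyadic_iff.mpr ?_, lex_append_cons_of_lt hlt⟩
      simp only [List.forall_mem_append, List.forall_mem_cons]
      exact ⟨hA, ha₂, ha₁, hB⟩
    · exact absurd ha₁.add_self hsum
    · exact absurd (Or.inl ⟨hsA, (VbcA_append_add_of_lt B hA ha₁ ha₂.one_le hgt).symm⟩) hnm
  · obtain rfl := ha₁.eq_of_add ha₂ (fullyDyadic_iff.mp hsB.1 _ (by simp))
    refine ⟨fullyDyadic_VbcB hsB, ?_⟩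
    rcases B.eq_nil_or_concat' with rfl | ⟨B, L, rfl⟩
    · refine absurd (Or.inr ⟨hsB, ?_⟩) hnm
      rw [VbcB_append_singleton]
      simp; omega
    · have h1 := hpos a₁ (by simp)
      rw [show A ++ (a₁ + a₁) :: (B ++ [L]) = (A ++ (a₁ + a₁) :: B) ++ [L] by simp,
        VbcB_append_singleton, List.append_assoc, List.cons_append]
      exact lex_append_cons_of_lt (by omega)

theorem dmTgt.descent_of_fullyDyadic {τ τ' : List ℕ} (hτ : posL τ) (h : dmTgt τ τ')
    (hfd : fullyDyadic τ) :
    fullyDyadic τ' ∧ (τ'.sum < τ.sum ∨ (τ'.sum = τ.sum ∧ List.Lex (· < ·) τ τ')) := by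
  obtain ⟨-, j, hj, hy, hnm, hrel⟩ := h
  rcases faceN_cases hj (ne_nil_of_VbcRel_faceN hj hrel) with
    ⟨a, hτa⟩ | ⟨a, hτa⟩ | ⟨A, a₁, a₂, B, rfl, hface⟩
  · exact (fullyDyadic_and_sum_lt_of_end_face hfd (.inl hτa) (hτ a (by rw [hτa]; simp)) hy
      hrel).imp_right .inl
  · exact (fullyDyadic_and_sum_lt_of_end_face hfd (.inr hτa) (hτ a (by rw [hτa]; simp)) hy
      hrel).imp_right .inl
  · rw [hface] at hy hnm hrel
    obtain ⟨hfd', hlex⟩ := fullyDyadic_and_lex_of_merge hfd hτ hnm hrel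
    refine ⟨hfd', .inr ⟨?_, hlex⟩⟩
    rw [hrel.sum_eq hy]
    simp; omega

theorem bval_append_of_forall {u : List ℕ} (v : List ℕ) (hu : ∀ a ∈ u, IsPowTwo a) :
    bval (u ++ v) = bval v := by
  rw [bval, dyLen_append_of_forall v hu, List.getD_append_right _ _ _ _ (by omega)]
  simp [bval]

theorem take_dyLen_append_of_forall {u : List ℕ} (v : List ℕ) (hu : ∀ a ∈ u, IsPowTwo a) :
    (u ++ v).take (dyLen (u ++ v)) = u ++ v.take (dyLen v) := by
  rw [dyLen_append_of_forall v hu, List.take_length_add_append]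

theorem one_le_bval {l : List ℕ} (hl : posL l) (h : dyLen l < l.length) : 1 ≤ bval l := by
  rw [bval, List.getD_eq_getElem _ _ h]
  exact hl _ (List.getElem_mem h)

theorem lt_dyLen_VbcA_or_bval_lt {τ y : List ℕ} (hy : dyLen y < y.length)
    (hq : dyLen y + 1 = dyLen τ) (hb : ltrim (bval y) < bval τ) :
    dyLen τ < dyLen (VbcA y) ∨ (dyLen (VbcA y) = dyLen τ ∧ bval (VbcA y) < bval τ) := by
  rcases dyLen_VbcA_cases hy with h | ⟨h, hbv⟩
  · exact .inl (by omega)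
  · exact .inr ⟨by omega, hbv ▸ hb⟩

theorem descent_of_merge_at_breakpoint {A B : List ℕ} {a₁ a₂ : ℕ} (hA : ∀ a ∈ A, IsPowTwo a)
    (ha₁ : IsPowTwo a₁) (ha₂ : ¬ IsPowTwo a₂) (ha₂_pos : 1 ≤ a₂)
    (hsA : srcA (A ++ (a₁ + a₂) :: B))
    (hq : dyLen (A ++ (a₁ + a₂) :: B) < dyLen (A ++ a₁ :: a₂ :: B))
    (hnm : ¬ VbcRel (A ++ (a₁ + a₂) :: B) (A ++ a₁ :: a₂ :: B)) :
    dyLen (A ++ a₁ :: a₂ :: B) < dyLen (VbcA (A ++ (a₁ + a₂) :: B)) ∨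
      (dyLen (VbcA (A ++ (a₁ + a₂) :: B)) = dyLen (A ++ a₁ :: a₂ :: B) ∧
        bval (VbcA (A ++ (a₁ + a₂) :: B)) < bval (A ++ a₁ :: a₂ :: B)) := by
  have hAa₁ : ∀ a ∈ A ++ [a₁], IsPowTwo a :=
    List.forall_mem_append.mpr ⟨hA, List.forall_mem_singleton.mpr ha₁⟩
  have hτ : A ++ a₁ :: a₂ :: B = (A ++ [a₁]) ++ a₂ :: B := by simp
  have hqτ : dyLen (A ++ a₁ :: a₂ :: B) = A.length + 1 := by
    rw [hτ, dyLen_append_cons_of_not_isPowTwo B hAa₁ ha₂, List.length_append,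
      List.length_singleton]
  have hbτ : bval (A ++ a₁ :: a₂ :: B) = a₂ := by
    rw [hτ, bval_append_cons_of_not_isPowTwo B hAa₁ ha₂]
  have hc : ¬ IsPowTwo (a₁ + a₂) := fun hc => by
    rw [dyLen_append_of_forall _ hA, dyLen_cons_of_isPowTwo _ hc] at hq
    omega
  rcases lt_trichotomy a₁ a₂ with hlt | rfl | hgt
  · refine lt_dyLen_VbcA_or_bval_lt hsA.1 ?_ ?_
    · rw [dyLen_append_cons_of_not_isPowTwo B hA hc, hqτ]
    · rw [bval_append_cons_of_not_isPowTwo B hA hc, hbτ]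
      exact ltrim_add_lt_of_lt ha₁ hlt
  · exact absurd ha₁ ha₂
  · exact absurd (.inl ⟨hsA, (VbcA_append_add_of_lt B hA ha₁ ha₂_pos hgt).symm⟩) hnm

theorem descent_of_merge_in_prefix {A B : List ℕ} {a₁ a₂ : ℕ} (hA : ∀ a ∈ A, IsPowTwo a)
    (ha₁ : IsPowTwo a₁) (ha₂ : IsPowTwo a₂) (hB : dyLen B < B.length) (hBpos : posL B)
    (hsA : srcA (A ++ (a₁ + a₂) :: B))
    (hnm : ¬ VbcRel (A ++ (a₁ + a₂) :: B) (A ++ a₁ :: a₂ :: B)) :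
    dyLen (A ++ a₁ :: a₂ :: B) < dyLen (VbcA (A ++ (a₁ + a₂) :: B)) ∨
      (dyLen (VbcA (A ++ (a₁ + a₂) :: B)) = dyLen (A ++ a₁ :: a₂ :: B) ∧
        bval (VbcA (A ++ (a₁ + a₂) :: B)) < bval (A ++ a₁ :: a₂ :: B)) ∨
      (dyLen (VbcA (A ++ (a₁ + a₂) :: B)) = dyLen (A ++ a₁ :: a₂ :: B) ∧
        bval (VbcA (A ++ (a₁ + a₂) :: B)) = bval (A ++ a₁ :: a₂ :: B) ∧
        List.Lex (· < ·) ((A ++ a₁ :: a₂ :: B).take (dyLen (A ++ a₁ :: a₂ :: B)))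
          ((VbcA (A ++ (a₁ + a₂) :: B)).take (dyLen (VbcA (A ++ (a₁ + a₂) :: B))))) := by
  have hpair : ∀ {x y : ℕ}, IsPowTwo x → IsPowTwo y →
      (∀ a ∈ A ++ [x, y], IsPowTwo a) ∧ A ++ x :: y :: B = (A ++ [x, y]) ++ B := fun hx hy =>
    ⟨List.forall_mem_append.mpr ⟨hA, by simp [hx, hy]⟩, by simp⟩
  obtain ⟨hτdy, hτ⟩ := hpair ha₁ ha₂
  rcases lt_trichotomy a₁ a₂ with hlt | rfl | hgt
  · obtain ⟨hτ'dy, hτ'⟩ := hpair ha₂ ha₁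
    rw [add_comm, VbcA_append_add_of_lt B hA ha₂ ha₁.one_le hlt, hτ, hτ',
      take_dyLen_append_of_forall B hτdy, take_dyLen_append_of_forall B hτ'dy,
      dyLen_append_of_forall B hτdy, dyLen_append_of_forall B hτ'dy,
      bval_append_of_forall B hτdy, bval_append_of_forall B hτ'dy]
    refine .inr (.inr ⟨by simp, rfl, ?_⟩)
    simpa using lex_append_cons_of_lt (u := A) (v := a₂ :: B.take (dyLen B))
      (w := a₁ :: B.take (dyLen B)) hlt
  · have hAc : ∀ a ∈ A ++ [a₁ + a₁], IsPowTwo a :=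
      List.forall_mem_append.mpr ⟨hA, List.forall_mem_singleton.mpr ha₁.add_self⟩
    have hy : A ++ (a₁ + a₁) :: B = (A ++ [a₁ + a₁]) ++ B := by simp
    refine (lt_dyLen_VbcA_or_bval_lt hsA.1 ?_ ?_).imp_right .inl
    · rw [hy, hτ, dyLen_append_of_forall B hAc, dyLen_append_of_forall B hτdy]
      simp; omega
    · rw [hy, hτ, bval_append_of_forall B hAc, bval_append_of_forall B hτdy]
      exact ltrim_lt (one_le_bval hBpos hB)
  · exact absurd (.inl ⟨hsA, (VbcA_append_add_of_lt B hA ha₁ ha₂.one_le hgt).symm⟩) hnm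

theorem dmTgt.descent_of_not_fullyDyadic {τ τ' : List ℕ} (hτ : posL τ) (h : dmTgt τ τ')
    (hnfd : ¬ fullyDyadic τ) :
    dyLen τ < dyLen τ' ∨ (dyLen τ' = dyLen τ ∧ bval τ' < bval τ) ∨
      (dyLen τ' = dyLen τ ∧ bval τ' = bval τ ∧
        List.Lex (· < ·) (τ.take (dyLen τ)) (τ'.take (dyLen τ'))) := by
  obtain ⟨-, j, hj, hy, hnm, hrel⟩ := h
  have hlen := length_eq_of_VbcRel_faceN hj hrel
  have hqτ : dyLen τ < τ.length := lt_of_le_of_ne (dyLen_le_length τ) hnfd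
  have hcases := faceN_cases hj (ne_nil_of_VbcRel_faceN hj hrel)
  generalize faceN j τ = y at hy hnm hrel hcases
  rcases hrel with ⟨hsA, rfl⟩ | ⟨hsB, rfl⟩
  swap
  · have := fullyDyadic_VbcB hsB
    rw [fullyDyadic] at this
    exact .inl (by omega)
  rcases le_or_gt (dyLen τ) (dyLen y) with hq | hq
  · exact .inl (lt_of_le_of_lt hq (lt_dyLen_VbcA hsA.1))
  rcases hcases with ⟨a, rfl⟩ | ⟨a, rfl⟩ | ⟨A, a₁, a₂, B, rfl, rfl⟩
  · have ha : IsPowTwo a := by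
      by_contra ha
      rw [dyLen_cons_of_not_isPowTwo _ ha] at hq
      omega
    refine (lt_dyLen_VbcA_or_bval_lt hsA.1 (dyLen_cons_of_isPowTwo _ ha).symm ?_).imp_right .inl
    rw [bval_cons_of_isPowTwo _ ha]
    exact ltrim_lt (one_le_bval hy hsA.1)
  · have := min_length_dyLen_append y [a] []
    rw [List.append_nil, min_eq_right (dyLen_le_length y)] at this
    simp at hqτ
    omega
  · have hpre : A.length + 1 ≤ dyLen (A ++ a₁ :: a₂ :: B) := by
      have := min_length_dyLen_append A (a₁ :: a₂ :: B) ((a₁ + a₂) :: B)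
      omega
    obtain ⟨hA, ha₁⟩ : (∀ a ∈ A, IsPowTwo a) ∧ IsPowTwo a₁ := by
      have := forall_isPowTwo_of_length_le_dyLen (u := A ++ [a₁]) (v := a₂ :: B)
        (by simpa using hpre)
      simpa only [List.forall_mem_append, List.forall_mem_singleton] using this
    by_cases ha₂ : IsPowTwo a₂
    · have hB : dyLen B < B.length := by
        refine lt_of_le_of_ne (dyLen_le_length B) fun hB => hnfd (fullyDyadic_iff.mpr ?_)
        simp only [List.forall_mem_append, List.forall_mem_cons]
        exact ⟨hA, ha₁, ha₂, fullyDyadic_iff.mp hB⟩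
      exact descent_of_merge_in_prefix hA ha₁ ha₂ hB (fun a ha => hτ a (by simp [ha])) hsA hnm
    · exact (descent_of_merge_at_breakpoint hA ha₁ ha₂ (hτ a₂ (by simp)) hsA hq
        hnm).imp_right .inl

/-! ### Acyclicity -/

theorem Relation.TransGen.apply_lt_apply {α β : Type*} [Preorder β] {r : α → α → Prop}
    {f : α → β} (hf : ∀ a b, r a b → f b < f a) {a b : α} (h : Relation.TransGen r a b) :
    f b < f a := by
  induction h with
  | single hab => exact hf _ _ hab
  | tail _ hbc ih => exact (hf _ _ hbc).trans ih

instance : DecidablePred fullyDyadic := fun l => inferInstanceAs (Decidable (dyLen l = l.length))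

def complexity (τ : List ℕ) : ℕ ×ₗ ℕ ×ₗ (List ℕ)ᵒᵈ :=
  if fullyDyadic τ then toLex (0, toLex (τ.sum, OrderDual.toDual τ))
  else toLex (τ.length - dyLen τ, toLex (bval τ, OrderDual.toDual (τ.take (dyLen τ))))

theorem dmTgt.complexity_lt {τ τ' : List ℕ} (hτ : posL τ) (h : dmTgt τ τ') :
    complexity τ' < complexity τ := by
  have hlen : τ'.length = τ.length := by
    obtain ⟨-, j, hj, -, -, hrel⟩ := h
    exact length_eq_of_VbcRel_faceN hj hrel
  by_cases hfd : fullyDyadic τ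
  · obtain ⟨hfd', hdesc⟩ := h.descent_of_fullyDyadic hτ hfd
    simp only [complexity, if_pos hfd, if_pos hfd', Prod.Lex.toLex_lt_toLex, lt_irrefl,
      OrderDual.toDual_lt_toDual, true_and, false_or]
    exact hdesc
  · have hqτ : dyLen τ < τ.length := lt_of_le_of_ne (dyLen_le_length τ) hfd
    rcases h.descent_of_not_fullyDyadic hτ hfd with hq | ⟨hq, hb⟩ | ⟨hq, hb, hlex⟩
    · have := dyLen_le_length τ'
      unfold complexity
      split_ifs <;> exact Prod.Lex.toLex_lt_toLex.mpr (.inl (by omega))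
    · have hfd' : ¬ fullyDyadic τ' := by rw [fullyDyadic]; omega
      rw [complexity, complexity, if_neg hfd, if_neg hfd', Prod.Lex.toLex_lt_toLex,
        Prod.Lex.toLex_lt_toLex]
      exact .inr ⟨by rw [hq, hlen], .inl hb⟩
    · have hfd' : ¬ fullyDyadic τ' := by rw [fullyDyadic]; omega
      rw [complexity, complexity, if_neg hfd, if_neg hfd', Prod.Lex.toLex_lt_toLex,
        Prod.Lex.toLex_lt_toLex, OrderDual.toDual_lt_toDual]
      exact .inr ⟨by rw [hq, hlen], .inr ⟨hb, hlex⟩⟩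

open Classical in
noncomputable def vbc (x : List ℕ) : List ℕ := if srcA x then VbcA x else VbcB x

theorem VbcRel.eq_vbc {x y : List ℕ} (h : VbcRel x y) : y = vbc x := by
  rcases h with ⟨hA, rfl⟩ | ⟨hB, rfl⟩
  · rw [vbc, if_pos hA]
  · rw [vbc, if_neg (not_srcA_of_fullyDyadic hB.1)]

theorem vbcRel_vbc {x : List ℕ} (h : srcA x ∨ srcB x) : VbcRel x (vbc x) := by
  rcases h with hA | hB
  · exact .inl ⟨hA, by rw [vbc, if_pos hA]⟩
  · exact .inr ⟨hB, by rw [vbc, if_neg (not_srcA_of_fullyDyadic hB.1)]⟩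

open Classical in
noncomputable def rank (x : List ℕ) : WithBot ((ℕ ×ₗ ℕ ×ₗ (List ℕ)ᵒᵈ) ×ₗ Bool) :=
  if ∃ s, posL s ∧ VbcRel s x then WithBot.some (toLex (complexity x, false))
  else if posL x ∧ (srcA x ∨ srcB x) then WithBot.some (toLex (complexity (vbc x), true))
  else ⊥

theorem rank_lt_of_edgeBc {x y : List ℕ} (h : edgeBc x y) : rank y < rank x := by
  rcases h with ⟨hx, hxy⟩ | ⟨⟨s, hs, hsx⟩, i, hi, rfl, hy, hnm, hny⟩
  · have hsrc : srcA x ∨ srcB x := hxy.imp And.left And.left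
    have hnx : ¬ ∃ s, posL s ∧ VbcRel s x := fun ⟨_, _, hsx⟩ =>
      hsrc.elim hsx.not_src.1 hsx.not_src.2
    have hy : ∃ s, posL s ∧ VbcRel s y := ⟨x, hx, hxy⟩
    rw [rank, if_pos hy, rank, if_neg hnx, if_pos ⟨hx, hsrc⟩, ← hxy.eq_vbc,
      WithBot.coe_lt_coe, Prod.Lex.toLex_lt_toLex]
    exact .inr ⟨rfl, Bool.false_lt_true⟩
  · have hx : ∃ s, posL s ∧ VbcRel s x := ⟨s, hs, hsx⟩
    rw [rank, if_neg hny, rank, if_pos hx]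
    split_ifs with hsrc
    · rw [WithBot.coe_lt_coe, Prod.Lex.toLex_lt_toLex]
      exact .inl (dmTgt.complexity_lt (posL_of_VbcRel hs hsx)
        ⟨⟨s, hs, hsx⟩, i, hi, hy, hnm, vbcRel_vbc hsrc.2⟩)
    · exact WithBot.bot_lt_coe _

/-- Acyclicity of the bit-chipping field: the `V∂`-graph contains no directed cycle.
Concretely, in each double move `τ → τ'` between targets, for `τ` not fully dyadic
either the dyadic length `q` increases, or `q` is constant and the breakpoint value
decreases, or both are constant and the dyadic part increases lexicographically; and for
`τ` fully dyadic, `τ'` is fully dyadic and either the sum of components decreases or it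
stays constant and the sequence increases lexicographically. -/
theorem stmt16 :
    (∀ x : List ℕ, ¬ Relation.TransGen edgeBc x x) ∧
    (∀ τ τ' : List ℕ, posL τ → dmTgt τ τ' → ¬ fullyDyadic τ →
      dyLen τ < dyLen τ' ∨
      (dyLen τ' = dyLen τ ∧ bval τ' < bval τ) ∨
      (dyLen τ' = dyLen τ ∧ bval τ' = bval τ ∧
        List.Lex (· < ·) (τ.take (dyLen τ)) (τ'.take (dyLen τ')))) ∧
    (∀ τ τ' : List ℕ, posL τ → dmTgt τ τ' → fullyDyadic τ →
      fullyDyadic τ' ∧ (τ'.sum < τ.sum ∨ (τ'.sum = τ.sum ∧ List.Lex (· < ·) τ τ'))) :=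
  ⟨fun _ hx => lt_irrefl _ (hx.apply_lt_apply (f := rank) fun _ _ => rank_lt_of_edgeBc),
    fun _ _ hτ h => h.descent_of_not_fullyDyadic hτ,
    fun _ _ hτ h => h.descent_of_fullyDyadic hτ⟩
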